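/- arXiv:2511.08385 — 2 statements merged into one kernel-verified Lean document; each statement's English description precedes it below -/
import Mathlib

section
/- For d ≥ 2 and D ≥ 1, the map that sends a directed edge (u → v) of the Kautz digraph K(d, D) to the word of length D+2 obtained by appending the last letter of v to u is an isomorphism of digraphs from the line digraph of K(d, D) onto K(d, D+1). (The line digraph of a digraph G has the directed edges of G as vertices, with an arc from e to f whenever the head of e equals the tail of f.) -/
/-- A Kautz word: a sequence with no two consecutive letters equal. -/
def IsKautzWord (d n : ℕ) (w : Fin n → Fin (d + 1)) : Prop :=
  ∀ (i : ℕ) (h : i + 1 < n), w ⟨i, Nat.lt_of_succ_lt h⟩ ≠ w ⟨i + 1, h⟩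

/-- Vertices of the Kautz digraph `K(d, D)`: Kautz words of length `D+1`. -/
def KautzVertex (d D : ℕ) : Type :=
  { w : Fin (D + 1) → Fin (d + 1) // IsKautzWord d (D + 1) w }

/-- Adjacency in `K(d, D)`: `v` is obtained from `u` by a left shift and
appending a new last letter (automatically distinct since `v` is a Kautz word). -/
def KautzAdj (d D : ℕ) (u v : KautzVertex d D) : Prop :=
  ∀ i : Fin D, v.1 i.castSucc = u.1 i.succ

/-- A directed walk of length `m` from `u` to `v` exists. -/
def HasWalk {V : Type*} (Adj : V → V → Prop) : ℕ → V → V → Prop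
  | 0, u, v => u = v
  | m + 1, u, v => ∃ w, Adj u w ∧ HasWalk Adj m w v

/-- Directed distance: minimum length of a directed walk. -/
noncomputable def ddist {V : Type*} (Adj : V → V → Prop) (u v : V) : ℕ :=
  sInf {m | HasWalk Adj m u v}

/-- A directed cycle of length `L` through the arc `u → v`: a closed walk of
length `L` with pairwise distinct vertices traversing the arc `u → v`. -/
def IsCycleThroughEdge {V : Type*} (Adj : V → V → Prop) (u v : V) (L : ℕ) : Prop :=
  0 < L ∧ ∃ c : ZMod L → V, Function.Injective c ∧
    (∀ i, Adj (c i) (c (i + 1))) ∧ c 0 = u ∧ c 1 = v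

/-- Length of the shortest directed cycle through the arc `u → v`. -/
noncomputable def cycleLen {V : Type*} (Adj : V → V → Prop) (u v : V) : ℕ :=
  sInf {L | IsCycleThroughEdge Adj u v L}

/-- `ρ_k(d, D)`: number of edges of `K(d, D)` whose shortest cycle has length `k+1`. -/
noncomputable def rho (d D k : ℕ) : ℕ :=
  Nat.card {p : KautzVertex d D × KautzVertex d D //
    KautzAdj d D p.1 p.2 ∧ cycleLen (KautzAdj d D) p.1 p.2 = k + 1}

/-- `σ_k(d, D)`: number of ordered pairs of distinct vertices at distance exactly `k`. -/
noncomputable def sigma (d D k : ℕ) : ℕ :=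
  Nat.card {p : KautzVertex d D × KautzVertex d D //
    p.1 ≠ p.2 ∧ ddist (KautzAdj d D) p.1 p.2 = k}

/-- Vertices of the line digraph: the directed edges of the digraph. -/
def LineVertex {V : Type*} (Adj : V → V → Prop) : Type _ :=
  { p : V × V // Adj p.1 p.2 }

/-- Adjacency in the line digraph: the head of `e` equals the tail of `f`. -/
def LineAdj {V : Type*} (Adj : V → V → Prop)
    (e f : LineVertex Adj) : Prop :=
  e.1.2 = f.1.1

/-! An edge `u → v` of `K(d, D)` is the same thing as the Kautz word `u₀ ⋯ u_D v_D`: its first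
`D + 1` letters are `u`, its last `D + 1` letters are `v`, and it is a Kautz word because
`u_D = v_{D-1} ≠ v_D`. The inverse sends a word `w` to the edge `init w → tail w`. Two edges `e`, `f`
are consecutive iff the last `D + 1` letters of the word of `e` are the first `D + 1` letters of the
word of `f`, which is adjacency in `K(d, D + 1)`. -/

theorem Fin.tail_snoc_eq_snoc_tail {n : ℕ} {β : Sort*} (q : Fin (n + 1) → β) (b : β) :
    Fin.tail (Fin.snoc q b : Fin (n + 2) → β) = Fin.snoc (Fin.tail q) b := by
  ext i
  cases i using Fin.lastCases with
  | last => simp [Fin.tail]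
  | cast j =>
    simp only [Fin.tail]
    rw [Fin.succ_castSucc, Fin.snoc_castSucc, Fin.snoc_castSucc]
    rfl

section Kautz

variable {d n D : ℕ}

theorem isKautzWord_succ_iff {w : Fin (n + 1) → Fin (d + 1)} :
    IsKautzWord d (n + 1) w ↔ ∀ i : Fin n, w i.castSucc ≠ w i.succ :=
  ⟨fun hw i => hw i.1 (by omega), fun hw i hi => hw ⟨i, by omega⟩⟩

namespace IsKautzWord

variable {w : Fin (n + 1) → Fin (d + 1)}

theorem init (hw : IsKautzWord d (n + 1) w) : IsKautzWord d n (Fin.init w) :=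
  fun i hi => hw i (by omega)

theorem tail (hw : IsKautzWord d (n + 1) w) : IsKautzWord d n (Fin.tail w) :=
  fun i hi => hw (i + 1) (by omega)

theorem snoc (hw : IsKautzWord d (n + 1) w) {a : Fin (d + 1)} (ha : w (Fin.last n) ≠ a) :
    IsKautzWord d (n + 2) (Fin.snoc w a) := by
  refine isKautzWord_succ_iff.mpr fun i => ?_
  cases i using Fin.lastCases with
  | last => simpa using ha
  | cast j =>
    rw [Fin.succ_castSucc, Fin.snoc_castSucc, Fin.snoc_castSucc]
    exact isKautzWord_succ_iff.mp hw j

end IsKautzWord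

theorem kautzAdj_iff {u v : KautzVertex d D} :
    KautzAdj d D u v ↔ (Fin.tail u.1 : Fin D → Fin (d + 1)) = Fin.init v.1 :=
  ⟨fun h => funext fun i => (h i).symm, fun h i => (congrFun h i).symm⟩

namespace KautzAdj

variable {u v : KautzVertex d (D + 1)}

theorem last_ne (h : KautzAdj d (D + 1) u v) : u.1 (Fin.last (D + 1)) ≠ v.1 (Fin.last (D + 1)) :=
  (h (Fin.last D)).symm ▸ isKautzWord_succ_iff.mp v.2 (Fin.last D)

theorem tail_snoc (h : KautzAdj d (D + 1) u v) :
    Fin.tail (Fin.snoc (α := fun _ => Fin (d + 1)) u.1 (v.1 (Fin.last (D + 1)))) = v.1 := by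
  rw [Fin.tail_snoc_eq_snoc_tail, kautzAdj_iff.mp h, Fin.snoc_init_self]

end KautzAdj

def lineKautzEquiv (d D : ℕ) : LineVertex (KautzAdj d (D + 1)) ≃ KautzVertex d (D + 2) where
  toFun e := ⟨Fin.snoc e.1.1.1 (e.1.2.1 (Fin.last _)), e.1.1.2.snoc e.2.last_ne⟩
  invFun w := ⟨(⟨Fin.init w.1, w.2.init⟩, ⟨Fin.tail w.1, w.2.tail⟩),
    kautzAdj_iff.mpr (Fin.tail_init_eq_init_tail w.1)⟩
  left_inv e := by
    refine Subtype.ext (Prod.ext (Subtype.ext ?_) (Subtype.ext ?_))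
    · exact Fin.init_snoc (α := fun _ => Fin (d + 1)) _ _
    · exact KautzAdj.tail_snoc e.2
  right_inv w := Subtype.ext (Fin.snoc_init_self w.1)

theorem lineAdj_iff_kautzAdj_lineKautzEquiv (e f : LineVertex (KautzAdj d (D + 1))) :
    LineAdj (KautzAdj d (D + 1)) e f ↔
      KautzAdj d (D + 2) (lineKautzEquiv d D e) (lineKautzEquiv d D f) := by
  rw [kautzAdj_iff]
  change e.1.2 = f.1.1 ↔ Fin.tail (Fin.snoc (α := fun _ => Fin (d + 1)) _ _) =
    Fin.init (Fin.snoc (α := fun _ => Fin (d + 1)) _ _)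
  rw [KautzAdj.tail_snoc e.2, Fin.init_snoc]
  exact Subtype.ext_iff

end Kautz

theorem line_digraph_iso_general (d D : ℕ) (hD : 1 ≤ D) :
    ∃ φ : LineVertex (KautzAdj d D) ≃ KautzVertex d (D + 1),
      (∀ e : LineVertex (KautzAdj d D), (φ e).1 =
          fun i : Fin (D + 2) =>
            if h : i.1 < D + 1 then e.1.1.1 ⟨i.1, h⟩
            else e.1.2.1 (Fin.last D)) ∧
      (∀ e f : LineVertex (KautzAdj d D),
        LineAdj (KautzAdj d D) e f ↔ KautzAdj d (D + 1) (φ e) (φ f)) := by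
  obtain ⟨D, rfl⟩ := Nat.exists_eq_add_of_le' hD
  -- `Fin.snoc` unfolds definitionally to the `dite` of the statement.
  exact ⟨lineKautzEquiv d D, fun e => rfl, lineAdj_iff_kautzAdj_lineKautzEquiv⟩

/-- For `d ≥ 2`, `D ≥ 1`, the map sending a directed edge
`(u → v)` of `K(d, D)` to the word of length `D+2` obtained by appending the
last letter of `v` to `u` is an isomorphism of digraphs from the line digraph
of `K(d, D)` onto `K(d, D+1)`. -/
theorem line_digraph_iso (d D : ℕ) (hd : 2 ≤ d) (hD : 1 ≤ D) :
    ∃ φ : LineVertex (KautzAdj d D) ≃ KautzVertex d (D + 1),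
      (∀ e : LineVertex (KautzAdj d D), (φ e).1 =
          fun i : Fin (D + 2) =>
            if h : i.1 < D + 1 then e.1.1.1 ⟨i.1, h⟩
            else e.1.2.1 (Fin.last D)) ∧
      (∀ e f : LineVertex (KautzAdj d D),
        LineAdj (KautzAdj d D) e f ↔ KautzAdj d (D + 1) (φ e) (φ f)) :=
  line_digraph_iso_general d D hD
end

section
/- Let d ≥ 2, D ≥ 1, and let (u → v) be a directed edge of the Kautz digraph K(d, D). Let r be the largest t ∈ {0, …, D+1} such that the suffix of v of length t equals the prefix of u of length t. Then the directed distance from v to u in K(d, D) is exactly D + 1 − r. -/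
/-- The suffix of `v` of length `t` equals the prefix of `u` of length `t`
(for words of length `D+1`). -/
def Overlap (d D : ℕ) (u v : KautzVertex d D) (t : ℕ) : Prop :=
  ∃ _ : t ≤ D + 1, ∀ i (hi : i < t),
    v.1 ⟨D + 1 - t + i, by omega⟩ = u.1 ⟨i, by omega⟩

/-!
A walk of length `m` from `x` to `y` shifts letters: `y i = x (m + i)`. Hence a walk from `v` to
`u` of length `m ≤ D + 1` makes the suffix of `v` of length `D + 1 - m` a prefix of `u`, and
`m ≥ D + 1 - r`. Conversely, starting at `v` and appending `u r, u (r + 1), …, u D` reaches `u`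
in `D + 1 - r` steps. Every intermediate word is a Kautz word: `u r ≠ v D`, since otherwise the
overlap would extend (`r = 0`) or `u (r - 1) = v D = u r` (`r > 0`), and the later appended
letters are consecutive letters of `u`.
-/

theorem ddist_eq_of_hasWalk {V : Type*} {Adj : V → V → Prop} {u v : V} {m : ℕ}
    (hwalk : HasWalk Adj m u v) (hmin : ∀ k, HasWalk Adj k u v → m ≤ k) :
    ddist Adj u v = m :=
  le_antisymm (Nat.sInf_le hwalk) (le_csInf ⟨m, hwalk⟩ hmin)

namespace KautzVertex

variable {d D : ℕ}

theorem apply_eq_of_hasWalk {m : ℕ} {x y : KautzVertex d D}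
    (h : HasWalk (KautzAdj d D) m x y) (i : ℕ) (hi : m + i < D + 1) :
    y.1 ⟨i, by omega⟩ = x.1 ⟨m + i, hi⟩ := by
  induction m generalizing x with
  | zero => subst h; exact congrArg _ (Fin.ext (by simp))
  | succ m ih =>
    obtain ⟨w, hxw, hwy⟩ := h
    rw [ih hwy (by omega)]
    exact (hxw ⟨m + i, by omega⟩).trans (congrArg x.1 (Fin.ext (by simp; omega)))

def push (x : KautzVertex d D) (a : Fin (d + 1)) (ha : x.1 (Fin.last D) ≠ a) :
    KautzVertex d D :=
  ⟨fun i => if h : (i : ℕ) < D then x.1 ⟨i + 1, by omega⟩ else a, by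
    intro i hi
    by_cases hiD : i + 1 < D
    · simpa [dif_pos hiD, dif_pos (show i < D by omega)] using x.2 (i + 1) (by omega)
    · obtain rfl : i + 1 = D := by omega
      simp only [dif_neg hiD, dif_pos (Nat.lt_succ_self i)]
      exact ha⟩

theorem push_apply_last (x : KautzVertex d D) (a : Fin (d + 1)) (ha : x.1 (Fin.last D) ≠ a) :
    (x.push a ha).1 (Fin.last D) = a := by
  simp [push]

theorem kautzAdj_push (x : KautzVertex d D) (a : Fin (d + 1)) (ha : x.1 (Fin.last D) ≠ a) :
    KautzAdj d D x (x.push a ha) := fun i => by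
  simp [push, Fin.succ]

end KautzVertex

namespace Overlap

open KautzVertex

variable {d D : ℕ} {u x : KautzVertex d D} {t : ℕ}

theorem eq (hx : Overlap d D u x (D + 1)) : x = u :=
  Subtype.ext <| funext fun i =>
    (congrArg x.1 (Fin.ext (by simp))).trans (hx.2 i i.isLt)

theorem push (hx : Overlap d D u x t) (ht : t ≤ D)
    (hjunction : x.1 (Fin.last D) ≠ u.1 ⟨t, by omega⟩) :
    Overlap d D u (x.push _ hjunction) (t + 1) := by
  refine ⟨by omega, fun i hi => ?_⟩
  obtain hit | rfl := Nat.lt_succ_iff_lt_or_eq.1 hi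
  · simp only [KautzVertex.push, dif_pos (show D + 1 - (t + 1) + i < D by omega)]
    exact (congrArg x.1 (Fin.ext (by simp; omega))).trans (hx.2 i hit)
  · simp only [KautzVertex.push, dif_neg (show ¬ D + 1 - (i + 1) + i < D by omega)]

theorem last_ne (hx : Overlap d D u x t) (hnext : ¬ Overlap d D u x (t + 1)) (ht : t ≤ D) :
    x.1 (Fin.last D) ≠ u.1 ⟨t, by omega⟩ := by
  intro hlast
  rcases Nat.eq_zero_or_pos t with rfl | htpos
  · exact hnext ⟨by omega, fun i hi => by
      obtain rfl : i = 0 := by omega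
      exact (congrArg x.1 (Fin.ext (by simp))).trans hlast⟩
  · refine u.2 (t - 1) (by omega) ?_
    calc u.1 ⟨t - 1, _⟩ = x.1 ⟨D + 1 - t + (t - 1), _⟩ := (hx.2 (t - 1) (by omega)).symm
      _ = x.1 (Fin.last D) := congrArg x.1 (Fin.ext (by simp; omega))
      _ = u.1 ⟨t - 1 + 1, _⟩ := hlast.trans (congrArg u.1 (Fin.ext (by simp; omega)))

theorem of_hasWalk {m : ℕ} (h : HasWalk (KautzAdj d D) m x u) (hm : m ≤ D + 1) :
    Overlap d D u x (D + 1 - m) :=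
  ⟨by omega, fun i hi =>
    (congrArg x.1 (Fin.ext (by simp; omega))).trans (apply_eq_of_hasWalk h i (by omega)).symm⟩

theorem hasWalk (hx : Overlap d D u x t)
    (hjunction : ∀ ht : t ≤ D, x.1 (Fin.last D) ≠ u.1 ⟨t, by omega⟩) :
    HasWalk (KautzAdj d D) (D + 1 - t) x u := by
  obtain ⟨k, hk⟩ : ∃ k, D + 1 - t = k := ⟨_, rfl⟩
  rw [hk]
  induction k generalizing t x with
  | zero =>
    obtain rfl : t = D + 1 := by have := hx.1; omega
    exact hx.eq
  | succ k ih =>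
    have ht : t ≤ D := by omega
    refine ⟨_, kautzAdj_push x _ (hjunction ht), ih (hx.push ht _) (fun ht' => ?_) (by omega)⟩
    rw [push_apply_last]
    exact u.2 t (by omega)

end Overlap

theorem dist_back_eq_of_overlap_general (d D : ℕ)
    (u v : KautzVertex d D) (r : ℕ)
    (hr : Overlap d D u v r) (hmax : ∀ t, Overlap d D u v t → t ≤ r) :
    ddist (KautzAdj d D) v u = D + 1 - r := by
  refine ddist_eq_of_hasWalk (hr.hasWalk fun hrD => hr.last_ne (fun hnext => ?_) hrD) fun m hm => ?_
  · have := hmax _ hnext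
    omega
  · by_cases hmD : m ≤ D + 1
    · have := hmax _ (Overlap.of_hasWalk hm hmD)
      omega
    · omega

/-- If `r` is the largest `t ∈ {0, …, D+1}` such that the
suffix of `v` of length `t` equals the prefix of `u` of length `t`, then the
directed distance from `v` to `u` in `K(d, D)` is exactly `D + 1 − r`. -/
theorem dist_back_eq_of_overlap (d D : ℕ) (hd : 2 ≤ d) (hD : 1 ≤ D)
    (u v : KautzVertex d D) (huv : KautzAdj d D u v) (r : ℕ)
    (hr : Overlap d D u v r) (hmax : ∀ t, Overlap d D u v t → t ≤ r) :
    ddist (KautzAdj d D) v u = D + 1 - r :=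
  dist_back_eq_of_overlap_general d D u v r hr hmax
end
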